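/- Let n ≥ 1, let q_n = (n+1)^n − 1 and c_n = n·q_n. Let F be the free group on two generators x, t, and let R be the normal closure in F of {ρ_n(x,t), x^n}. Then x^{c_n} lies in the join (inside F) of the normal closure of {ρ_n(x,t)} and the commutator subgroup [R, R]. -/

import Mathlib

/-- The word `ρ_k(x,t) = (t x t⁻¹) x (t x t⁻¹)⁻¹ x^{-(k+1)}`, evaluated at elements
`x`, `t` of a group. -/
def rhoWord {G : Type*} [Group G] (k : ℕ) (x t : G) : G :=
  (t * x * t⁻¹) * x * (t * x * t⁻¹)⁻¹ * x ^ (-(k + 1 : ℤ))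

/-!
Write `a = t x t⁻¹`. Modulo the relator `ρ_n`, conjugation by `a` raises `x` to the power
`n + 1`, so conjugation by `aⁿ` sends `xⁿ` to `x^{n (n+1)ⁿ}`. Hence `x^{n (n+1)ⁿ}` and
`aⁿ xⁿ a⁻ⁿ` agree modulo the normal closure of `ρ_n`, and `x^{c_n} = x^{n (n+1)ⁿ} x⁻ⁿ`
differs from `x^{n (n+1)ⁿ} (aⁿ xⁿ a⁻ⁿ)⁻¹` by the commutator `[aⁿ, xⁿ]`. Since `xⁿ` is a relator
of `R` and `aⁿ = t xⁿ t⁻¹`, this commutator lies in `[R, R]`.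
-/

open scoped commutatorElement

section

variable {G : Type*} [Group G]

theorem conj_pow_eq_pow_pow_of_conj_eq_pow {a x : G} {m : ℕ} (h : a * x * a⁻¹ = x ^ m)
    (k : ℕ) : a ^ k * x * (a ^ k)⁻¹ = x ^ m ^ k := by
  induction k with
  | zero => simp
  | succ k ih =>
    calc a ^ (k + 1) * x * (a ^ (k + 1))⁻¹ = a * (a ^ k * x * (a ^ k)⁻¹) * a⁻¹ := by
          rw [pow_succ']; group
      _ = x ^ m ^ (k + 1) := by rw [ih, ← conj_pow, h, ← pow_mul, ← pow_succ']

theorem map_rhoWord {H : Type*} [Group H] (f : G →* H) (k : ℕ) (x t : G) :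
    f (rhoWord k x t) = rhoWord k (f x) (f t) := by
  simp only [rhoWord, map_mul, map_inv, map_zpow]

theorem rhoWord_eq_one_iff {k : ℕ} {x t : G} :
    rhoWord k x t = 1 ↔ t * x * t⁻¹ * x * (t * x * t⁻¹)⁻¹ = x ^ (k + 1) := by
  rw [rhoWord, mul_eq_one_iff_eq_inv, ← zpow_neg, neg_neg]
  norm_cast

theorem conj_pow_pow_eq_of_rhoWord_eq_one {k : ℕ} {x t : G} (h : rhoWord k x t = 1) :
    (t * x * t⁻¹) ^ k * x ^ k * ((t * x * t⁻¹) ^ k)⁻¹ = x ^ (k * (k + 1) ^ k) := by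
  rw [← conj_pow, conj_pow_eq_pow_pow_of_conj_eq_pow (rhoWord_eq_one_iff.mp h), ← pow_mul,
    mul_comm]

theorem pow_mem_normalClosure_rhoWord_sup_commutator (k : ℕ) (x t : G) :
    x ^ (k * ((k + 1) ^ k - 1)) ∈
      Subgroup.normalClosure {rhoWord k x t} ⊔
        ⁅Subgroup.normalClosure {rhoWord k x t, x ^ k},
          Subgroup.normalClosure {rhoWord k x t, x ^ k}⁆ := by
  set N := Subgroup.normalClosure {rhoWord k x t}
  set R := Subgroup.normalClosure {rhoWord k x t, x ^ k}
  set a := t * x * t⁻¹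
  have hw : x ^ (k * (k + 1) ^ k) * (a ^ k * x ^ k * (a ^ k)⁻¹)⁻¹ ∈ N := by
    have hρ : rhoWord k (QuotientGroup.mk' N x) (QuotientGroup.mk' N t) = 1 := by
      rw [← map_rhoWord, QuotientGroup.mk'_apply, QuotientGroup.eq_one_iff]
      exact Subgroup.subset_normalClosure rfl
    rw [← QuotientGroup.eq_one_iff, ← QuotientGroup.mk'_apply]
    simp only [a, map_mul, map_inv, map_pow]
    rw [conj_pow_pow_eq_of_rhoWord_eq_one hρ, mul_inv_cancel]
  have hxR : x ^ k ∈ R := Subgroup.subset_normalClosure (Set.mem_insert_of_mem _ rfl)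
  have haR : a ^ k ∈ R := by
    rw [conj_pow]
    exact Subgroup.normalClosure_normal.conj_mem _ hxR t
  have hexp : k * (k + 1) ^ k = k * ((k + 1) ^ k - 1) + k := by
    rw [← Nat.mul_add_one, Nat.sub_add_cancel (Nat.one_le_pow _ _ k.succ_pos)]
  have hsplit : x ^ (k * ((k + 1) ^ k - 1)) =
      x ^ (k * (k + 1) ^ k) * (a ^ k * x ^ k * (a ^ k)⁻¹)⁻¹ * ⁅a ^ k, x ^ k⁆ := by
    rw [commutatorElement_def, hexp, pow_add]; group
  rw [hsplit]
  exact mul_mem (Subgroup.mem_sup_left hw)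
    (Subgroup.mem_sup_right (Subgroup.commutator_mem_commutator haR hxR))

end

theorem pow_c_mem_join_general (n : ℕ)
    (x t : FreeGroup (Fin 2))
    (R : Subgroup (FreeGroup (Fin 2)))
    (hR : R = Subgroup.normalClosure {rhoWord n x t, x ^ n}) :
    x ^ (n * ((n + 1) ^ n - 1)) ∈
      Subgroup.normalClosure {rhoWord n x t} ⊔ ⁅R, R⁆ :=
  hR ▸ pow_mem_normalClosure_rhoWord_sup_commutator n x t

/-- Let `n ≥ 1`, `q_n = (n+1)^n - 1`, `c_n = n * q_n`.  Let `F` be the free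
group on two generators `x, t` and `R` the normal closure of `{ρ_n(x,t), x^n}` in `F`.
Then `x^{c_n}` lies in the join of the normal closure of `{ρ_n(x,t)}` and the commutator
subgroup `[R, R]` (taken inside `F`). -/
theorem pow_c_mem_join (n : ℕ) (hn : 1 ≤ n)
    (x t : FreeGroup (Fin 2)) (hx : x = FreeGroup.of 0) (ht : t = FreeGroup.of 1)
    (R : Subgroup (FreeGroup (Fin 2)))
    (hR : R = Subgroup.normalClosure {rhoWord n x t, x ^ n}) :
    x ^ (n * ((n + 1) ^ n - 1)) ∈
      Subgroup.normalClosure {rhoWord n x t} ⊔ ⁅R, R⁆ :=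
  pow_c_mem_join_general n x t R hR
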